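/- The following are equivalent: (1) there exists a linear subspace 𝔥 of X′′ such that P(a;Q) = D(a; 𝔥 + X′′_−) for every a ∈ X′′; (2) 𝔄_Q = K_Q; (3) P(a;Q) = D(a; 𝔄_Q) for every a ∈ X′′; (4) the intersection of the weak* closure of J(Â_Q) in X′′′ with the positive cone of X′′′ equals the weak* closure of J(C_Q) in X′′′, where J : X′ → X′′′ is the canonical embedding. Moreover, when (1) holds, 𝔥 is contained in Ĥ_Q and the norm closure of 𝔥 + X′′_− equals K_Q. -/

import Mathlib

open NormedSpace Pointwise

/-- Positivity in the dual of an ordered normed space. -/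
def dualNonneg (X : Type*) [NormedAddCommGroup X] [NormedSpace ℝ X] [Lattice X]
    (η : StrongDual ℝ X) : Prop :=
  ∀ f : X, 0 ≤ f → 0 ≤ η f

/-- Positivity in the bidual. -/
def bidualNonneg (X : Type*) [NormedAddCommGroup X] [NormedSpace ℝ X] [Lattice X]
    (a : StrongDual ℝ (StrongDual ℝ X)) : Prop :=
  ∀ η : StrongDual ℝ X, dualNonneg X η → 0 ≤ a η

/-- Positivity in the tridual `X′′′`. -/
def tridualNonneg (X : Type*) [NormedAddCommGroup X] [NormedSpace ℝ X] [Lattice X]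
    (ℵ : StrongDual ℝ (StrongDual ℝ (StrongDual ℝ X))) : Prop :=
  ∀ a : StrongDual ℝ (StrongDual ℝ X), bidualNonneg X a → 0 ≤ ℵ a

/-- The weak* closure of a subset of the dual of a normed space `Z`. -/
noncomputable def wstarClosure (Z : Type*) [NormedAddCommGroup Z] [NormedSpace ℝ Z]
    (S : Set (StrongDual ℝ Z)) : Set (StrongDual ℝ Z) :=
  StrongDual.toWeakDual ⁻¹' closure (StrongDual.toWeakDual '' S)

/-- The value of the primal problem `P(a; Q)`, as an extended real number. -/
noncomputable def Pval (X : Type*) [NormedAddCommGroup X] [NormedSpace ℝ X]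
    (Q : Set (StrongDual ℝ X)) (a : StrongDual ℝ (StrongDual ℝ X)) : EReal :=
  sSup {x : EReal | ∃ η ∈ Q, x = ((a η : ℝ) : EReal)}

/-- The value of the dual problem `D(a; K)` (with `inf ∅ = +∞`). -/
noncomputable def Dval (X : Type*) [NormedAddCommGroup X] [NormedSpace ℝ X]
    (e : X) (K : Set (StrongDual ℝ (StrongDual ℝ X))) (a : StrongDual ℝ (StrongDual ℝ X)) : EReal :=
  sInf {x : EReal | ∃ c : ℝ, x = (c : EReal) ∧
    ∃ z ∈ K, c • (inclusionInDoubleDual ℝ X e) + z = a}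

/-!
All four conditions say that the closed cone `𝔄_Q = cl (Ĥ_Q + X′′₋)` is as large as it can be,
namely the polar cone `K_Q` of `Q`.

Since `η e = 1` on `Q`, one has `D(·; K_Q) = P(·; Q)`. The value `D(·; K)` of a set `K` with
`K + X′′₋ ⊆ K` does not change when `K` is replaced by its norm closure: a point of the closure lies
within `r` of `K`, and in the order-unit norm `r • e` dominates the open ball of radius `r`.
Conversely, `P = D(·; K)` forces `z - r • e ∈ K` for every `z ∈ K_Q` and `r > 0`, so that
`cl K = K_Q`; for `K = 𝔥 + X′′₋` the subspace `𝔥` must then vanish on `Q`, hence on `Â_Q`.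

Condition (4) is the polar form of (2): by Hahn–Banach in the weak* topology, whose continuous
functionals are the evaluations, the weak* closures of `J(Â_Q)` and `J(C_Q)` are bipolars, so (4)
says that `𝔄_Q` and `K_Q` have the same polar in `X′′′`, which for closed cones means they are equal.
-/

open Set

section NegPolar

variable {Z : Type*} [NormedAddCommGroup Z] [NormedSpace ℝ Z]

def negPolar (K : Set Z) : Set (StrongDual ℝ Z) := {f | ∀ z ∈ K, f z ≤ 0}

lemma negPolar_anti {K L : Set Z} (h : K ⊆ L) : negPolar L ⊆ negPolar K :=
  fun _ hf z hz ↦ hf z (h hz)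

lemma isClosed_negPolar (K : Set Z) : IsClosed (negPolar K) := by
  simp only [negPolar, ofPred_forall]
  exact isClosed_biInter fun z _ ↦
    isClosed_le (ContinuousLinearMap.apply ℝ ℝ z).continuous continuous_const

lemma negPolar_closure (K : Set Z) : negPolar (closure K) = negPolar K :=
  (negPolar_anti subset_closure).antisymm fun f hf _ hz ↦
    closure_minimal hf (isClosed_le f.continuous continuous_const) hz

lemma negPolar_add {K L : Set Z} (hK : 0 ∈ K) (hL : 0 ∈ L) :
    negPolar (K + L) = negPolar K ∩ negPolar L := by
  ext f
  refine ⟨fun hf ↦ ⟨fun x hx ↦ by simpa using hf (x + 0) (add_mem_add hx hL),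
    fun y hy ↦ by simpa using hf (0 + y) (add_mem_add hK hy)⟩, ?_⟩
  rintro ⟨hfK, hfL⟩ _ ⟨x, hx, y, hy, rfl⟩
  simpa using add_nonpos (hfK x hx) (hfL y hy)

lemma negPolar_submodule (A : Submodule ℝ Z) :
    negPolar (A : Set Z) = StrongDual.polarSubmodule ℝ A := by
  ext f
  rw [SetLike.mem_coe, StrongDual.mem_polarSubmodule]
  refine ⟨fun hf x hx ↦ le_antisymm (hf x hx) ?_, fun hf x hx ↦ (hf x hx).le⟩
  simpa using hf (-x) (A.neg_mem hx)

lemma negPolar_hull (s : Set Z) : negPolar (PointedCone.hull ℝ s : Set Z) = negPolar s := by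
  refine (negPolar_anti Submodule.subset_span).antisymm fun f hf _ hz ↦ ?_
  induction hz using Submodule.span_induction with
  | mem x hx => exact hf x hx
  | zero => simp
  | add x y _ _ hx hy => simpa using add_nonpos hx hy
  | smul t x _ hx =>
    rw [← Nonneg.coe_smul, map_smul, smul_eq_mul]
    exact mul_nonpos_of_nonneg_of_nonpos t.2 hx

lemma le_polarSubmodule_span_of_subset_negPolar {𝔥 : Submodule ℝ (StrongDual ℝ Z)}
    {Q : Set Z}    (h : (𝔥 : Set (StrongDual ℝ Z)) ⊆ negPolar Q) :
    𝔥 ≤ StrongDual.polarSubmodule ℝ (Submodule.span ℝ Q) := by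
  intro f hf
  rw [StrongDual.mem_polarSubmodule]
  intro x hx
  induction hx using Submodule.span_induction with
  | mem x hx => exact le_antisymm (h hf x hx) (by simpa using h (𝔥.neg_mem hf) x hx)
  | zero => simp
  | add x y _ _ hx hy => simp [hx, hy]
  | smul t x _ hx => simp [hx]

lemma subset_closure_of_negPolar_subset (K : PointedCone ℝ Z) {L : Set Z}
    (h : negPolar (K : Set Z) ⊆ negPolar L) : L ⊆ closure K := by
  intro x hx
  by_contra hxK
  obtain ⟨f, hfK, hfx⟩ :=
    ProperCone.hyperplane_separation_point ⟨K.closure, isClosed_closure⟩ (x₀ := x) hxK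
  have hf : -f ∈ negPolar L := h fun z hz ↦ by simpa using hfK z (subset_closure hz)
  linarith [hf x hx, show (-f) x = -f x from rfl]

end NegPolar

namespace PointedCone

variable {E : Type*} [AddCommGroup E] [Module ℝ E]

lemma coe_hull_of_convex {Q : Set E} (hQ : Convex ℝ Q) (hne : Q.Nonempty) :
    (hull ℝ Q : Set E) = {ξ | ∃ η ∈ Q, ∃ t : ℝ, 0 ≤ t ∧ ξ = t • η} := by
  ext ξ
  refine ⟨fun hξ ↦ ?_, ?_⟩
  · induction hξ using Submodule.span_induction with
    | mem η hη => exact ⟨η, hη, 1, zero_le_one, (one_smul ℝ η).symm⟩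
    | zero => exact ⟨hne.some, hne.some_mem, 0, le_rfl, (zero_smul ℝ _).symm⟩
    | add _ _ _ _ hx hy =>
      obtain ⟨η₁, hη₁, s, hs, rfl⟩ := hx
      obtain ⟨η₂, hη₂, t, ht, rfl⟩ := hy
      rcases (add_nonneg hs ht).eq_or_lt with hst | hst
      · obtain ⟨rfl, rfl⟩ : s = 0 ∧ t = 0 := ⟨by linarith, by linarith⟩
        exact ⟨η₁, hη₁, 0, le_rfl, by simp⟩
      · refine ⟨(s / (s + t)) • η₁ + (t / (s + t)) • η₂,
          hQ hη₁ hη₂ (by positivity) (by positivity) (by field_simp), s + t, hst.le, ?_⟩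
        rw [smul_add, smul_smul, smul_smul, mul_div_cancel₀ _ hst.ne',
          mul_div_cancel₀ _ hst.ne']
    | smul c _ _ hx =>
      obtain ⟨η, hη, t, ht, rfl⟩ := hx
      exact ⟨η, hη, c * t, mul_nonneg c.2 ht, by rw [← Nonneg.coe_smul, smul_smul]⟩
  · rintro ⟨η, hη, t, ht, rfl⟩
    exact (hull ℝ Q).smul_mem ht (subset_hull hη)

lemma coe_sub_coe (C : PointedCone ℝ E) :
    (C : Set E) - C = Submodule.span ℝ (C : Set E) := by
  ext x
  refine ⟨?_, fun hx ↦ ?_⟩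
  · rintro ⟨x, hx, y, hy, rfl⟩
    exact sub_mem (Submodule.subset_span hx) (Submodule.subset_span hy)
  induction hx using Submodule.span_induction with
  | mem x hx => exact ⟨x, hx, 0, C.zero_mem, sub_zero x⟩
  | zero => exact ⟨0, C.zero_mem, 0, C.zero_mem, sub_zero 0⟩
  | add _ _ _ _ hx hy =>
    obtain ⟨x₁, hx₁, y₁, hy₁, rfl⟩ := hx
    obtain ⟨x₂, hx₂, y₂, hy₂, rfl⟩ := hy
    exact ⟨x₁ + x₂, C.add_mem hx₁ hx₂, y₁ + y₂, C.add_mem hy₁ hy₂,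
      add_sub_add_comm _ _ _ _⟩
  | smul t _ _ hx =>
    obtain ⟨x, hx, y, hy, rfl⟩ := hx
    rcases le_or_gt 0 t with ht | ht
    · exact ⟨t • x, C.smul_mem ht hx, t • y, C.smul_mem ht hy, (smul_sub t x y).symm⟩
    · refine ⟨(-t) • y, C.smul_mem (neg_nonneg.mpr ht.le) hy,
        (-t) • x, C.smul_mem (neg_nonneg.mpr ht.le) hx, ?_⟩
      module

end PointedCone

section WeakStar

instance (Z : Type*) [NormedAddCommGroup Z] [NormedSpace ℝ Z] :
    LocallyConvexSpace ℝ (WeakDual ℝ Z) :=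
  WeakBilin.locallyConvexSpace (B := topDualPairing ℝ Z)

variable {E : Type*} [NormedAddCommGroup E] [NormedSpace ℝ E]

lemma wstarClosure_image_inclusionInDoubleDual (C : PointedCone ℝ E) :
    wstarClosure (StrongDual ℝ E) (inclusionInDoubleDual ℝ E '' C) =
      negPolar (negPolar (C : Set E)) := by
  set J := inclusionInDoubleDual ℝ E
  refine subset_antisymm (fun ℵ hℵ ↦ ?_) fun ℵ hℵ ↦ ?_
  · have hcl : IsClosed
        {ψ : WeakDual ℝ (StrongDual ℝ E) | ∀ z ∈ negPolar (C : Set E), ψ z ≤ 0} := by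
      simp only [ofPred_forall]
      exact isClosed_biInter fun z _ ↦ isClosed_le (WeakDual.eval_continuous z) continuous_const
    refine closure_minimal ?_ hcl hℵ
    rintro _ ⟨_, ⟨η, hη, rfl⟩, rfl⟩ z hz
    exact hz η hη
  · by_contra hns
    let D : PointedCone ℝ (WeakDual ℝ (StrongDual ℝ E)) :=
      C.map ((StrongDual.toWeakDual.toLinearMap ∘ₗ J.toLinearMap).restrictScalars _)
    obtain ⟨f, hfD, hfℵ⟩ :=
      ProperCone.hyperplane_separation_point ⟨D.closure, isClosed_closure⟩
        (x₀ := StrongDual.toWeakDual ℵ)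
        fun h ↦ hns (by simpa [D, wstarClosure, image_image] using h)
    obtain ⟨z, rfl⟩ := LinearMap.dualEmbedding_surjective _ f
    have hz : -z ∈ negPolar (C : Set E) := fun η hη ↦
      neg_nonpos.mpr (hfD _ (subset_closure ⟨η, hη, rfl⟩))
    have hℵz : ℵ z < 0 := hfℵ
    linarith [hℵ _ hz, map_neg ℵ z]

end WeakStar

lemma mem_closure_of_forall_sub_smul_mem {V : Type*} [NormedAddCommGroup V] [NormedSpace ℝ V]
    {K : Set V} {z : V} (u : V) (h : ∀ r : ℝ, 0 < r → z - r • u ∈ K) :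
    z ∈ closure K := by
  have hlim : Filter.Tendsto (fun r : ℝ ↦ z - r • u) (nhdsWithin 0 (Ioi 0)) (nhds z) := by
    have : Continuous fun r : ℝ ↦ z - r • u := by fun_prop
    simpa using (this.tendsto 0).mono_left nhdsWithin_le_nhds
  exact mem_closure_of_tendsto hlim (eventually_nhdsWithin_of_forall h)

section DualityValues

variable {X : Type*} [NormedAddCommGroup X] [NormedSpace ℝ X] {e : X}
  {K L : Set (StrongDual ℝ (StrongDual ℝ X))} {Q : Set (StrongDual ℝ X)}
  {a z : StrongDual ℝ (StrongDual ℝ X)}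

lemma Dval_eq_sInf (e : X) (K : Set (StrongDual ℝ (StrongDual ℝ X)))
    (a : StrongDual ℝ (StrongDual ℝ X)) :
    Dval X e K a = sInf ((↑) '' {c : ℝ | a - c • inclusionInDoubleDual ℝ X e ∈ K}) := by
  refine congrArg sInf (ext fun x ↦ ?_)
  constructor
  · rintro ⟨c, rfl, z, hz, rfl⟩
    exact ⟨c, show _ - _ ∈ K from (add_sub_cancel_left _ z).symm ▸ hz, rfl⟩
  · rintro ⟨c, hc, rfl⟩
    exact ⟨c, rfl, _, hc, add_sub_cancel _ _⟩

lemma Dval_le_of_sub_smul_mem {c : ℝ} (h : a - c • inclusionInDoubleDual ℝ X e ∈ K) :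
    Dval X e K a ≤ c := by
  rw [Dval_eq_sInf]
  exact sInf_le ⟨c, h, rfl⟩

lemma exists_sub_smul_mem_of_Dval_lt {c : ℝ} (h : Dval X e K a < c) :
    ∃ c' < c, a - c' • inclusionInDoubleDual ℝ X e ∈ K := by
  rw [Dval_eq_sInf, sInf_lt_iff] at h
  obtain ⟨_, ⟨c', hc', rfl⟩, hlt⟩ := h
  exact ⟨c', EReal.coe_lt_coe_iff.mp hlt, hc'⟩

lemma Dval_anti (h : K ⊆ L) : Dval X e L a ≤ Dval X e K a := by
  simp only [Dval_eq_sInf]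
  exact sInf_le_sInf (image_mono fun _ hc ↦ h hc)

lemma coe_le_Pval {η : StrongDual ℝ X} (hη : η ∈ Q) : (a η : EReal) ≤ Pval X Q a :=
  le_sSup ⟨η, hη, rfl⟩

lemma Pval_le_coe_iff {c : ℝ} : Pval X Q a ≤ c ↔ ∀ η ∈ Q, a η ≤ c := by
  refine ⟨fun h η hη ↦ EReal.coe_le_coe_iff.1 ((coe_le_Pval hη).trans h),
    fun h ↦ sSup_le ?_⟩
  rintro _ ⟨η, hη, rfl⟩
  exact EReal.coe_le_coe_iff.2 (h η hη)

lemma sub_smul_mem_negPolar_iff (hQe : ∀ η ∈ Q, η e = 1) {c : ℝ} :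
    a - c • inclusionInDoubleDual ℝ X e ∈ negPolar Q ↔ ∀ η ∈ Q, a η ≤ c :=
  forall₂_congr fun η hη ↦ by simp [hQe η hη]

lemma Dval_negPolar (hQe : ∀ η ∈ Q, η e = 1) (a : StrongDual ℝ (StrongDual ℝ X)) :
    Dval X e (negPolar Q) a = Pval X Q a := by
  refine le_antisymm (EReal.le_of_forall_lt_iff_le.1 fun c hc ↦ Dval_le_of_sub_smul_mem ?_) ?_
  · exact (sub_smul_mem_negPolar_iff hQe).2 fun η hη ↦
      EReal.coe_le_coe_iff.1 ((coe_le_Pval hη).trans hc.le)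
  · rw [Dval_eq_sInf]
    refine le_sInf ?_
    rintro _ ⟨c, hc, rfl⟩
    exact Pval_le_coe_iff.2 ((sub_smul_mem_negPolar_iff hQe).1 hc)

lemma subset_negPolar_of_Pval_eq_Dval (h : ∀ a, Pval X Q a = Dval X e K a) :
    K ⊆ negPolar Q := fun z hz ↦
  Pval_le_coe_iff.1 <| (h z).trans_le <|
    Dval_le_of_sub_smul_mem (c := 0) (by convert hz using 1; module)

variable [Lattice X]

variable (X) in
def bidualNonposCone : PointedCone ℝ (StrongDual ℝ (StrongDual ℝ X)) where
  carrier := {a | ∀ η, dualNonneg X η → a η ≤ 0}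
  add_mem' ha hb η hη := add_nonpos (ha η hη) (hb η hη)
  zero_mem' _ _ := le_rfl
  smul_mem' t _ ha η hη := mul_nonpos_of_nonneg_of_nonpos t.2 (ha η hη)

lemma coe_bidualNonposCone :
    (bidualNonposCone X : Set (StrongDual ℝ (StrongDual ℝ X))) = {a | bidualNonneg X (-a)} := by
  ext a
  exact forall₂_congr fun η _ ↦ neg_nonneg.symm

lemma setOf_tridualNonneg :
    {ℵ | tridualNonneg X ℵ} =
      negPolar (bidualNonposCone X : Set (StrongDual ℝ (StrongDual ℝ X))) := by
  rw [coe_bidualNonposCone]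
  ext ℵ
  refine ⟨fun h a ha ↦ ?_, fun h a ha ↦ ?_⟩
  · linarith [h (-a) ha, map_neg ℵ a]
  · linarith [h (-a) (by simpa [bidualNonneg] using ha), map_neg ℵ a]

lemma neg_smul_mem_bidualNonposCone (he : 0 ≤ e) {t : ℝ} (ht : 0 ≤ t) :
    -(t • inclusionInDoubleDual ℝ X e) ∈ bidualNonposCone X := fun η hη ↦ by
  simpa using mul_nonneg ht (hη e he)

lemma sub_smul_mem_bidualNonposCone_of_norm_lt (he : 0 ≤ e)
    (hbnorm : ∀ a : StrongDual ℝ (StrongDual ℝ X), ‖a‖ = sInf {c : ℝ |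
      bidualNonneg X (a + c • inclusionInDoubleDual ℝ X e) ∧
      bidualNonneg X (c • inclusionInDoubleDual ℝ X e - a)})
    {r : ℝ} (hr : ‖z‖ < r) :
    z - r • inclusionInDoubleDual ℝ X e ∈ bidualNonposCone X := by
  set S := {c : ℝ | bidualNonneg X (z + c • inclusionInDoubleDual ℝ X e) ∧
      bidualNonneg X (c • inclusionInDoubleDual ℝ X e - z)}
  -- `sInf ∅ = 0`: an empty `S` would force `z = 0`, but `0 ∈ S` then.
  have hS : S.Nonempty := by
    by_contra hS
    rw [not_nonempty_iff_eq_empty] at hS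
    have hz : z = 0 := (norm_eq_zero (E := StrongDual ℝ (StrongDual ℝ X))).mp <| by
      rw [show ‖z‖ = sInf S from hbnorm z, hS, Real.sInf_empty]
    exact hS.subset (show (0 : ℝ) ∈ S by simp [S, hz, bidualNonneg])
  obtain ⟨c, ⟨-, hc⟩, hcr⟩ := exists_lt_of_csInf_lt hS (hbnorm z ▸ hr)
  intro η hη
  have := hc η hη
  simp only [sub_apply, FunLike.coe_smul, Pi.smul_apply, dual_def, smul_eq_mul] at this ⊢
  nlinarith [hη e he]

lemma sub_smul_mem_of_Dval_lt (he : 0 ≤ e) (hK : K + bidualNonposCone X ⊆ K) {c : ℝ}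
    (h : Dval X e K a < c) : a - c • inclusionInDoubleDual ℝ X e ∈ K := by
  obtain ⟨c', hc', hK'⟩ := exists_sub_smul_mem_of_Dval_lt h
  convert hK (add_mem_add hK' (neg_smul_mem_bidualNonposCone he (sub_nonneg.mpr hc'.le))) using 1
  module

lemma sub_smul_mem_of_mem_closure
    (hball : ∀ (z : StrongDual ℝ (StrongDual ℝ X)) (r : ℝ), ‖z‖ < r →
      z - r • inclusionInDoubleDual ℝ X e ∈ bidualNonposCone X)
    (hK : K + bidualNonposCone X ⊆ K) (hz : z ∈ closure K) {r : ℝ} (hr : 0 < r) :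
    z - r • inclusionInDoubleDual ℝ X e ∈ K := by
  obtain ⟨w, hw, hzw⟩ :=
    (Metric.mem_closure_iff (α := StrongDual ℝ (StrongDual ℝ X))).mp hz r hr
  rw [dist_eq_norm (E := StrongDual ℝ (StrongDual ℝ X))] at hzw
  convert hK (add_mem_add hw (hball _ r hzw)) using 1
  abel

lemma Dval_closure
    (hball : ∀ (z : StrongDual ℝ (StrongDual ℝ X)) (r : ℝ), ‖z‖ < r →
      z - r • inclusionInDoubleDual ℝ X e ∈ bidualNonposCone X)
    (hK : K + bidualNonposCone X ⊆ K) (a : StrongDual ℝ (StrongDual ℝ X)) :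
    Dval X e (closure K) a = Dval X e K a := by
  refine le_antisymm (Dval_anti subset_closure) (EReal.le_of_forall_lt_iff_le.1 fun c hc ↦ ?_)
  obtain ⟨c', hc', hmem⟩ := exists_sub_smul_mem_of_Dval_lt hc
  refine Dval_le_of_sub_smul_mem ?_
  convert sub_smul_mem_of_mem_closure hball hK hmem (sub_pos.mpr hc') using 1
  module

lemma closure_eq_negPolar_of_Pval_eq_Dval (he : 0 ≤ e) (hK : K + bidualNonposCone X ⊆ K)
    (h : ∀ a, Pval X Q a = Dval X e K a) : closure K = negPolar Q := by
  refine (closure_minimal (subset_negPolar_of_Pval_eq_Dval h) (isClosed_negPolar Q)).antisymm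
    fun z hz ↦ mem_closure_of_forall_sub_smul_mem (inclusionInDoubleDual ℝ X e) fun r hr ↦ ?_
  refine sub_smul_mem_of_Dval_lt he hK ?_
  rw [← h z]
  exact (Pval_le_coe_iff.2 hz).trans_lt (EReal.coe_lt_coe_iff.2 hr)

lemma add_bidualNonposCone_add_subset (S : Set (StrongDual ℝ (StrongDual ℝ X))) :
    S + (bidualNonposCone X : Set (StrongDual ℝ (StrongDual ℝ X))) + bidualNonposCone X ⊆
      S + bidualNonposCone X := by
  rw [add_assoc]
  exact add_subset_add_left fun _ ⟨x, hx, y, hy, hxy⟩ ↦ hxy ▸ add_mem hx hy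

lemma le_polarSubmodule_and_closure_eq_of_Pval_eq_Dval (he : 0 ≤ e)
    (𝔥 : Submodule ℝ (StrongDual ℝ (StrongDual ℝ X)))
    (h : ∀ a, Pval X Q a = Dval X e ((𝔥 : Set _) + (bidualNonposCone X : Set _)) a) :
    𝔥 ≤ StrongDual.polarSubmodule ℝ (Submodule.span ℝ Q) ∧
      closure ((𝔥 : Set _) + (bidualNonposCone X : Set _)) = negPolar Q :=
  ⟨le_polarSubmodule_span_of_subset_negPolar <|
      (subset_add_left _ (bidualNonposCone X).zero_mem).trans (subset_negPolar_of_Pval_eq_Dval h),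
    closure_eq_negPolar_of_Pval_eq_Dval he (add_bidualNonposCone_add_subset _) h⟩

end DualityValues

section AnnihilatorCone

variable {X : Type*} [NormedAddCommGroup X] [NormedSpace ℝ X] [Lattice X] {e : X}
  {Q : Set (StrongDual ℝ X)}

variable (X) in
/-- The cone `𝔄_Q`. -/
def annihilatorCone (Q : Set (StrongDual ℝ X)) : Set (StrongDual ℝ (StrongDual ℝ X)) :=
  closure ((StrongDual.polarSubmodule ℝ (Submodule.span ℝ Q) : Set _) +
    (bidualNonposCone X : Set _))

lemma annihilatorCone_subset_negPolar (hQ : ∀ η ∈ Q, dualNonneg X η) :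
    annihilatorCone X Q ⊆ negPolar Q := by
  refine closure_minimal ?_ (isClosed_negPolar Q)
  rintro _ ⟨h, hh, n, hn, rfl⟩ η hη
  have : h η = 0 := (StrongDual.mem_polarSubmodule ℝ _ h).1 hh η (Submodule.subset_span hη)
  simpa [this] using hn η (hQ η hη)

lemma Dval_annihilatorCone
    (hball : ∀ (z : StrongDual ℝ (StrongDual ℝ X)) (r : ℝ), ‖z‖ < r →
      z - r • inclusionInDoubleDual ℝ X e ∈ bidualNonposCone X)
    (a : StrongDual ℝ (StrongDual ℝ X)) :
    Dval X e (annihilatorCone X Q) a =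
      Dval X e ((StrongDual.polarSubmodule ℝ (Submodule.span ℝ Q) : Set _) +
        (bidualNonposCone X : Set _)) a :=
  Dval_closure hball (add_bidualNonposCone_add_subset _) a

lemma annihilatorCone_eq_negPolar_iff_Pval_eq_Dval (he : 0 ≤ e)
    (hball : ∀ (z : StrongDual ℝ (StrongDual ℝ X)) (r : ℝ), ‖z‖ < r →
      z - r • inclusionInDoubleDual ℝ X e ∈ bidualNonposCone X)
    (hQe : ∀ η ∈ Q, η e = 1) :
    annihilatorCone X Q = negPolar Q ↔ ∀ a, Pval X Q a = Dval X e (annihilatorCone X Q) a :=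
  ⟨fun h a ↦ by rw [h, Dval_negPolar hQe], fun h ↦
    (le_polarSubmodule_and_closure_eq_of_Pval_eq_Dval he _ fun a ↦
      (h a).trans (Dval_annihilatorCone hball a)).2⟩

lemma exists_Pval_eq_Dval_iff (he : 0 ≤ e)
    (hball : ∀ (z : StrongDual ℝ (StrongDual ℝ X)) (r : ℝ), ‖z‖ < r →
      z - r • inclusionInDoubleDual ℝ X e ∈ bidualNonposCone X)
    (hQe : ∀ η ∈ Q, η e = 1) (hQ : ∀ η ∈ Q, dualNonneg X η) :
    (∃ 𝔥 : Submodule ℝ (StrongDual ℝ (StrongDual ℝ X)),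
        ∀ a, Pval X Q a = Dval X e ((𝔥 : Set _) + (bidualNonposCone X : Set _)) a) ↔
      annihilatorCone X Q = negPolar Q := by
  refine ⟨fun ⟨𝔥, h⟩ ↦ ?_, fun h ↦ ⟨_, fun a ↦
    ((annihilatorCone_eq_negPolar_iff_Pval_eq_Dval he hball hQe).1 h a).trans
      (Dval_annihilatorCone hball a)⟩⟩
  obtain ⟨h𝔥, hcl⟩ := le_polarSubmodule_and_closure_eq_of_Pval_eq_Dval he 𝔥 h
  exact (annihilatorCone_subset_negPolar hQ).antisymm
    (hcl ▸ closure_mono (add_subset_add_right h𝔥))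

lemma wstarClosure_span_inter_tridualNonneg :
    wstarClosure (StrongDual ℝ (StrongDual ℝ X))
        (inclusionInDoubleDual ℝ (StrongDual ℝ X) '' (Submodule.span ℝ Q : Set _)) ∩
        {ℵ | tridualNonneg X ℵ} = negPolar (annihilatorCone X Q) := by
  have h :=
    wstarClosure_image_inclusionInDoubleDual (PointedCone.ofSubmodule (Submodule.span ℝ Q))
  rw [PointedCone.coe_ofSubmodule, negPolar_submodule] at h
  rw [h, annihilatorCone, negPolar_closure, negPolar_add (Submodule.zero_mem _)
    (bidualNonposCone X).zero_mem, setOf_tridualNonneg]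

lemma annihilatorCone_eq_negPolar_iff_negPolar_eq (hQ : ∀ η ∈ Q, dualNonneg X η) :
    annihilatorCone X Q = negPolar Q ↔
      negPolar (annihilatorCone X Q) = negPolar (negPolar Q) := by
  refine ⟨fun h ↦ by rw [h], fun h ↦ (annihilatorCone_subset_negPolar hQ).antisymm ?_⟩
  have hsup : ((PointedCone.ofSubmodule (StrongDual.polarSubmodule ℝ (Submodule.span ℝ Q)) ⊔
      bidualNonposCone X : PointedCone ℝ _) : Set (StrongDual ℝ (StrongDual ℝ X))) =
      (StrongDual.polarSubmodule ℝ (Submodule.span ℝ Q) : Set _) +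
        (bidualNonposCone X : Set _) := by
    rw [Submodule.coe_sup, PointedCone.coe_ofSubmodule]
  have := subset_closure_of_negPolar_subset _ (L := negPolar Q)
    (by rw [hsup, ← negPolar_closure, ← annihilatorCone, h])
  rwa [hsup] at this

end AnnihilatorCone

theorem stmt4_general
    (X : Type*) [NormedAddCommGroup X] [Lattice X]
    [NormedSpace ℝ X]
    -- `e` is a positive order unit inducing the lattice norm of the AM-space `X`
    (e : X) (he : 0 ≤ e)
    (hbnorm : ∀ a : StrongDual ℝ (StrongDual ℝ X), ‖a‖ = sInf {c : ℝ |
      bidualNonneg X (a + c • inclusionInDoubleDual ℝ X e) ∧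
      bidualNonneg X (c • inclusionInDoubleDual ℝ X e - a)})
    -- standing assumption on `Q`
    (H : Submodule ℝ X)
    (Q : Set (StrongDual ℝ X)) (hQne : Q.Nonempty) (hQconv : Convex ℝ Q)
    (hQ : Q = {η : StrongDual ℝ X | ∀ h ∈ H, η h = 0} ∩
      {η : StrongDual ℝ X | dualNonneg X η ∧ η e = 1})
    -- the derived sets
    (CQ : Set (StrongDual ℝ X)) (hCQ : CQ = {ξ : StrongDual ℝ X | ∃ η ∈ Q, ∃ t : ℝ, 0 ≤ t ∧ ξ = t • η})
    (AhatQ : Set (StrongDual ℝ X)) (hAhatQ : AhatQ = CQ - CQ)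
    (HhatQ : Set (StrongDual ℝ (StrongDual ℝ X)))
    (hHhatQ : HhatQ = {a : StrongDual ℝ (StrongDual ℝ X) | ∀ η ∈ AhatQ, a η = 0})
    (negSet : Set (StrongDual ℝ (StrongDual ℝ X)))
    (hnegSet : negSet = {a : StrongDual ℝ (StrongDual ℝ X) | bidualNonneg X (-a)})
    (AQ : Set (StrongDual ℝ (StrongDual ℝ X))) (hAQ : AQ = closure (HhatQ + negSet))
    (KQ : Set (StrongDual ℝ (StrongDual ℝ X)))
    (hKQ : KQ = {z : StrongDual ℝ (StrongDual ℝ X) | ∀ η ∈ Q, z η ≤ 0}) :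
    -- (1) ↔ (2)
    (((∃ 𝔥 : Submodule ℝ (StrongDual ℝ (StrongDual ℝ X)),
        ∀ a : StrongDual ℝ (StrongDual ℝ X),
          Pval X Q a = Dval X e ((𝔥 : Set (StrongDual ℝ (StrongDual ℝ X))) + negSet) a) ↔
      AQ = KQ) ∧
    -- (2) ↔ (3)
    ((AQ = KQ) ↔
      ∀ a : StrongDual ℝ (StrongDual ℝ X), Pval X Q a = Dval X e AQ a) ∧
    -- (3) ↔ (4)
    ((∀ a : StrongDual ℝ (StrongDual ℝ X), Pval X Q a = Dval X e AQ a) ↔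
      wstarClosure (StrongDual ℝ (StrongDual ℝ X))
          (inclusionInDoubleDual ℝ (StrongDual ℝ X) '' AhatQ) ∩
          {ℵ : StrongDual ℝ (StrongDual ℝ (StrongDual ℝ X)) | tridualNonneg X ℵ} =
        wstarClosure (StrongDual ℝ (StrongDual ℝ X))
          (inclusionInDoubleDual ℝ (StrongDual ℝ X) '' CQ))) ∧
    -- moreover
    (∀ 𝔥 : Submodule ℝ (StrongDual ℝ (StrongDual ℝ X)),
      (∀ a : StrongDual ℝ (StrongDual ℝ X),
          Pval X Q a = Dval X e ((𝔥 : Set (StrongDual ℝ (StrongDual ℝ X))) + negSet) a) →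
        (𝔥 : Set (StrongDual ℝ (StrongDual ℝ X))) ⊆ HhatQ ∧
        closure ((𝔥 : Set (StrongDual ℝ (StrongDual ℝ X))) + negSet) = KQ) := by
  have hQe : ∀ η ∈ Q, η e = 1 := fun η hη ↦ (hQ ▸ hη).2.2
  have hQpos : ∀ η ∈ Q, dualNonneg X η := fun η hη ↦ (hQ ▸ hη).2.1
  have hball := fun z r ↦ sub_smul_mem_bidualNonposCone_of_norm_lt (z := z) (r := r) he hbnorm
  replace hCQ : CQ = PointedCone.hull ℝ Q := by
    rw [hCQ, PointedCone.coe_hull_of_convex hQconv hQne]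
  replace hAhatQ : AhatQ = Submodule.span ℝ Q := by
    rw [hAhatQ, hCQ, PointedCone.coe_sub_coe, Submodule.span_span_of_tower]
  replace hHhatQ : HhatQ = StrongDual.polarSubmodule ℝ (Submodule.span ℝ Q) := by
    rw [hHhatQ, hAhatQ]
    exact (StrongDual.polarSubmodule_eq_setOfPred ℝ _).symm
  replace hnegSet : negSet = bidualNonposCone X := hnegSet.trans coe_bidualNonposCone.symm
  replace hAQ : AQ = annihilatorCone X Q := by rw [hAQ, hHhatQ, hnegSet, annihilatorCone]
  replace hKQ : KQ = negPolar Q := hKQ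
  subst hCQ hAhatQ hHhatQ hnegSet hAQ hKQ
  rw [wstarClosure_span_inter_tridualNonneg, wstarClosure_image_inclusionInDoubleDual,
    negPolar_hull, ← annihilatorCone_eq_negPolar_iff_negPolar_eq hQpos]
  have h23 := annihilatorCone_eq_negPolar_iff_Pval_eq_Dval he hball hQe
  exact ⟨⟨exists_Pval_eq_Dval_iff he hball hQe hQpos, h23, h23.symm⟩,
    le_polarSubmodule_and_closure_eq_of_Pval_eq_Dval he⟩

theorem stmt4
    (X : Type*) [NormedAddCommGroup X] [Lattice X] [IsOrderedAddMonoid X] [HasSolidNorm X]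
    [NormedSpace ℝ X] [CompleteSpace X]
    -- `e` is a positive order unit inducing the lattice norm of the AM-space `X`
    (e : X) (he : 0 ≤ e)
    (hnorm : ∀ f : X, ‖f‖ = sInf {c : ℝ | -(c • e) ≤ f ∧ f ≤ c • e})
    (hbnorm : ∀ a : StrongDual ℝ (StrongDual ℝ X), ‖a‖ = sInf {c : ℝ |
      bidualNonneg X (a + c • inclusionInDoubleDual ℝ X e) ∧
      bidualNonneg X (c • inclusionInDoubleDual ℝ X e - a)})
    -- standing assumption on `Q`
    (H : Submodule ℝ X) (hH : IsClosed (H : Set X))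
    (Q : Set (StrongDual ℝ X)) (hQne : Q.Nonempty) (hQcl : IsClosed Q) (hQconv : Convex ℝ Q)
    (hQ : Q = {η : StrongDual ℝ X | ∀ h ∈ H, η h = 0} ∩
      {η : StrongDual ℝ X | dualNonneg X η ∧ η e = 1})
    -- the derived sets
    (CQ : Set (StrongDual ℝ X)) (hCQ : CQ = {ξ : StrongDual ℝ X | ∃ η ∈ Q, ∃ t : ℝ, 0 ≤ t ∧ ξ = t • η})
    (AhatQ : Set (StrongDual ℝ X)) (hAhatQ : AhatQ = CQ - CQ)
    (HhatQ : Set (StrongDual ℝ (StrongDual ℝ X)))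
    (hHhatQ : HhatQ = {a : StrongDual ℝ (StrongDual ℝ X) | ∀ η ∈ AhatQ, a η = 0})
    (negSet : Set (StrongDual ℝ (StrongDual ℝ X)))
    (hnegSet : negSet = {a : StrongDual ℝ (StrongDual ℝ X) | bidualNonneg X (-a)})
    (AQ : Set (StrongDual ℝ (StrongDual ℝ X))) (hAQ : AQ = closure (HhatQ + negSet))
    (KQ : Set (StrongDual ℝ (StrongDual ℝ X)))
    (hKQ : KQ = {z : StrongDual ℝ (StrongDual ℝ X) | ∀ η ∈ Q, z η ≤ 0}) :
    -- (1) ↔ (2)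
    (((∃ 𝔥 : Submodule ℝ (StrongDual ℝ (StrongDual ℝ X)),
        ∀ a : StrongDual ℝ (StrongDual ℝ X),
          Pval X Q a = Dval X e ((𝔥 : Set (StrongDual ℝ (StrongDual ℝ X))) + negSet) a) ↔
      AQ = KQ) ∧
    -- (2) ↔ (3)
    ((AQ = KQ) ↔
      ∀ a : StrongDual ℝ (StrongDual ℝ X), Pval X Q a = Dval X e AQ a) ∧
    -- (3) ↔ (4)
    ((∀ a : StrongDual ℝ (StrongDual ℝ X), Pval X Q a = Dval X e AQ a) ↔
      wstarClosure (StrongDual ℝ (StrongDual ℝ X))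
          (inclusionInDoubleDual ℝ (StrongDual ℝ X) '' AhatQ) ∩
          {ℵ : StrongDual ℝ (StrongDual ℝ (StrongDual ℝ X)) | tridualNonneg X ℵ} =
        wstarClosure (StrongDual ℝ (StrongDual ℝ X))
          (inclusionInDoubleDual ℝ (StrongDual ℝ X) '' CQ))) ∧
    -- moreover
    (∀ 𝔥 : Submodule ℝ (StrongDual ℝ (StrongDual ℝ X)),
      (∀ a : StrongDual ℝ (StrongDual ℝ X),
          Pval X Q a = Dval X e ((𝔥 : Set (StrongDual ℝ (StrongDual ℝ X))) + negSet) a) →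
        (𝔥 : Set (StrongDual ℝ (StrongDual ℝ X))) ⊆ HhatQ ∧
        closure ((𝔥 : Set (StrongDual ℝ (StrongDual ℝ X))) + negSet) = KQ) :=
  stmt4_general X e he hbnorm H Q hQne hQconv hQ CQ hCQ AhatQ hAhatQ HhatQ hHhatQ negSet hnegSet AQ
    hAQ KQ hKQ
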